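/- Fix real k_s, k_m, k_ℓ with k_m ≥ 0 and set 𝛂 = k_s + k_ℓ − 1/2, 𝛃 = k_ℓ − 1/2. For every L ∈ Π_k, say arising from index i (i.e. L = w·{(ξ_1,…,ξ_i, √−1 t_{i+1},…,√−1 t_r) : t ∈ ℝ^{r−i}} with ξ ∈ D_k(Θ_i), w ∈ W), there exists a polynomial p_L ∈ ℂ[λ_1,…,λ_r] such that p_L(z) ≠ 0 for every z ∈ L, while p_L vanishes identically on every L' ∈ Π_k with L' ≠ L arising from an index i' with i' ≥ i (equivalently, with dim L' ≤ dim L). -/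

import Mathlib

noncomputable section

/-- The set `D_k(Θ_i)` of discrete spectral parameters (for `i = 0` this is the
singleton consisting of the empty tuple). -/
def DkSet (α β km : ℝ) (i : ℕ) : Set (Fin i → ℝ) :=
  {ξ | (∀ h : 0 < i, ∃ n : ℕ, ξ ⟨0, h⟩ + |β| - α - 1 = 2 * (n : ℝ)) ∧
       (∀ h : 0 < i, ξ ⟨i - 1, by omega⟩ < 0) ∧
       (∀ j : ℕ, ∀ h : j + 1 < i,
         ∃ n : ℕ, ξ ⟨j + 1, h⟩ - ξ ⟨j, by omega⟩ - 2 * km = 2 * (n : ℝ))}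

/-- Action on `ℂ^r` of the element of the Weyl group of type `BC_r` given by the
sign vector `ε` and the permutation `σ`. -/
def wActC (r : ℕ) (ε : Fin r → ℤˣ) (σ : Equiv.Perm (Fin r)) (z : Fin r → ℂ) : Fin r → ℂ :=
  fun j => ((ε j : ℤ) : ℂ) * z (σ⁻¹ j)

/-- The set `{(ξ_1, …, ξ_i, √−1 t_{i+1}, …, √−1 t_r) : t ∈ ℝ^{r−i}} ⊆ ℂ^r`. -/
def baseSet (r i : ℕ) (ξ : Fin i → ℝ) : Set (Fin r → ℂ) :=
  {z | (∀ j : Fin r, ∀ h : (j : ℕ) < i, z j = ((ξ ⟨(j : ℕ), h⟩ : ℝ) : ℂ)) ∧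
       (∀ j : Fin r, i ≤ (j : ℕ) → (z j).re = 0)}

/-!
A set `w · baseSet ξ` with `ξ ∈ D_k(Θ_i)` is `centerSet c` for the real vector
`c = w · (ξ, 0, …, 0)`: coordinates where `c` is nonzero are pinned to `c j`, the others range
over `iℝ`. This needs `ξ` to have no zero entry, which holds because the entries of `ξ` increase
(`k_m ≥ 0`) up to the last one, which is negative. Every entry of such a `ξ` has the form
`α + 1 - |β| + 2 t k_m + 2 m < 0` with `t < r`, so all nonzero coordinates of all centers lie in a
finite set `B`. The polynomial `∏_j ∏_{a ∈ B, a ≠ c j} (X j - a)` does not vanish on `centerSet c`,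
because a coordinate of a point of `centerSet c` equals a real number `a` only if `a = c j`. If
`L' ≠ L` and `i' ≥ i`, then `c'` has at least as many nonzero entries as `c`, so some `c' j ≠ 0`
differs from `c j`, and the factor `X j - c' j` vanishes on `L'`.
-/

open Pointwise

namespace DkSet

variable {α β km : ℝ} {i : ℕ} {ξ : Fin i → ℝ}

lemma exists_eq_add (hξ : ξ ∈ DkSet α β km i) (j : Fin i) :
    ∃ m : ℕ, ξ j = α + 1 - |β| + 2 * j * km + 2 * m := by
  obtain ⟨j, hj⟩ := j
  induction j with
  | zero =>
    obtain ⟨n, hn⟩ := hξ.1 hj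
    exact ⟨n, by push_cast; linarith⟩
  | succ j ih =>
    obtain ⟨m, hm⟩ := ih (by omega)
    obtain ⟨n, hn⟩ := hξ.2.2 j hj
    exact ⟨m + n, by push_cast; linarith⟩

lemma apply_neg (hkm : 0 ≤ km) (hξ : ξ ∈ DkSet α β km i) (j : Fin i) : ξ j < 0 := by
  obtain _ | n := i
  · exact j.elim0
  have hmono : Monotone ξ := Fin.monotone_iff_le_succ.2 fun j => by
    obtain ⟨m, hm⟩ := hξ.2.2 j (by omega)
    have : (0 : ℝ) ≤ m := m.cast_nonneg
    change ξ ⟨j, _⟩ ≤ ξ ⟨j + 1, _⟩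
    linarith
  calc ξ j ≤ ξ (Fin.last n) := hmono (Fin.le_last j)
    _ < 0 := hξ.2.1 n.succ_pos

lemma apply_ne_zero (hkm : 0 ≤ km) (hξ : ξ ∈ DkSet α β km i) (j : Fin i) : ξ j ≠ 0 :=
  (apply_neg hkm hξ j).ne

end DkSet

def dkValues (α β km : ℝ) (r : ℕ) : Set ℝ :=
  {x | x < 0 ∧ ∃ t < r, ∃ m : ℕ, x = α + 1 - |β| + 2 * t * km + 2 * m}

lemma dkValues_finite {km : ℝ} (hkm : 0 ≤ km) (α β : ℝ) (r : ℕ) :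
    (dkValues α β km r).Finite := by
  set γ := α + 1 - |β|
  refine (((Set.finite_Iio r).prod (Set.finite_Iio ⌈-γ / 2⌉₊)).image
    fun q : ℕ × ℕ => γ + 2 * q.1 * km + 2 * q.2).subset ?_
  rintro x ⟨hx, t, ht, m, rfl⟩
  refine ⟨(t, m), ⟨ht, Nat.lt_ceil.2 ?_⟩, rfl⟩
  nlinarith [(t.cast_nonneg : (0 : ℝ) ≤ t)]

lemma DkSet.apply_mem_dkValues {α β km : ℝ} {r i : ℕ} {ξ : Fin i → ℝ} (hkm : 0 ≤ km)
    (hir : i ≤ r) (hξ : ξ ∈ DkSet α β km i) (j : Fin i) : ξ j ∈ dkValues α β km r := by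
  obtain ⟨m, hm⟩ := DkSet.exists_eq_add hξ j
  exact ⟨DkSet.apply_neg hkm hξ j, j, by omega, m, hm⟩

def coordSet (x : ℝ) : Set ℂ :=
  if x = 0 then {w | w.re = 0} else {(x : ℂ)}

def centerSet {ι : Type*} (c : ι → ℝ) : Set (ι → ℂ) :=
  Set.univ.pi fun j => coordSet (c j)

lemma mem_coordSet_of_ne_zero {x : ℝ} (hx : x ≠ 0) {w : ℂ} : w ∈ coordSet x ↔ w = x := by
  simp [coordSet, hx]

lemma ofReal_mem_coordSet_iff {a x : ℝ} : (a : ℂ) ∈ coordSet x ↔ a = x := by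
  by_cases hx : x = 0
  · simp [coordSet, hx]
  · simp [mem_coordSet_of_ne_zero hx]

lemma units_mul_mem_coordSet_iff (u : ℤˣ) (w : ℂ) (x : ℝ) :
    ((u : ℤ) : ℂ) * w ∈ coordSet x ↔ w ∈ coordSet ((u : ℤ) * x) := by
  rcases Int.units_eq_one_or u with rfl | rfl
  · simp
  · simp only [coordSet, Units.val_neg, Units.val_one, Int.cast_neg, Int.cast_one, neg_one_mul,
      neg_eq_zero]
    split_ifs <;> simp [neg_eq_iff_eq_neg]

def padZero (r : ℕ) {i : ℕ} (ξ : Fin i → ℝ) : Fin r → ℝ :=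
  fun j => if h : (j : ℕ) < i then ξ ⟨j, h⟩ else 0

def weylAct {r : ℕ} (ε : Fin r → ℤˣ) (σ : Equiv.Perm (Fin r)) (c : Fin r → ℝ) : Fin r → ℝ :=
  fun j => ((ε j : ℤ) : ℝ) * c (σ⁻¹ j)

lemma baseSet_eq_centerSet {r i : ℕ} {ξ : Fin i → ℝ} (hξ : ∀ j, ξ j ≠ 0) :
    baseSet r i ξ = centerSet (padZero r ξ) := by
  ext z
  simp only [baseSet, centerSet, padZero, Set.mem_ofPred_eq, Set.mem_pi, Set.mem_univ,
    true_implies]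
  refine ⟨fun ⟨hlt, hge⟩ j => ?_, fun hz => ⟨fun j hj => ?_, fun j hj => ?_⟩⟩
  · by_cases hj : (j : ℕ) < i
    · simp [coordSet, hj, hξ, hlt j hj]
    · simp [coordSet, hj, hge j (not_lt.1 hj)]
  · simpa [coordSet, hj, hξ] using hz j
  · simpa [coordSet, not_lt.2 hj] using hz j

lemma image_wActC_centerSet {r : ℕ} (ε : Fin r → ℤˣ) (σ : Equiv.Perm (Fin r))
    (c : Fin r → ℝ) : wActC r ε σ '' centerSet c = centerSet (weylAct ε σ c) := by
  have hε (j : Fin r) : ((ε j : ℤ) : ℂ) * ((ε j : ℤ) : ℂ) = 1 := by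
    rw [← Int.cast_mul, ← Units.val_mul, Int.units_mul_self, Units.val_one, Int.cast_one]
  rw [Set.image_eq_preimage_of_inverse (g := fun z j => ((ε (σ j) : ℤ) : ℂ) * z (σ j))]
  · ext z
    simp only [centerSet, weylAct, Set.mem_preimage, Set.mem_univ_pi]
    exact σ.forall_congr fun j => by simp [units_mul_mem_coordSet_iff]
  · intro z; funext j; simp [wActC, ← mul_assoc, hε]
  · intro z; funext j; simp [wActC, ← mul_assoc, hε]

lemma support_weylAct {r : ℕ} (ε : Fin r → ℤˣ) (σ : Equiv.Perm (Fin r)) (c : Fin r → ℝ) :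
    Function.support (weylAct ε σ c) = σ '' Function.support c := by
  ext j
  simp [weylAct, Equiv.image_eq_preimage_symm, Units.ne_zero]

lemma ncard_support_padZero {r i : ℕ} (hir : i ≤ r) {ξ : Fin i → ℝ} (hξ : ∀ j, ξ j ≠ 0) :
    (Function.support (padZero r ξ)).ncard = i := by
  have : Function.support (padZero r ξ) = {j : Fin r | (j : ℕ) < i} := by
    ext j
    by_cases hj : (j : ℕ) < i <;> simp [padZero, hj, hξ]
  rw [this, Set.ncard_eq_toFinset_card', Set.toFinset_ofPred, Fin.card_filter_val_lt,
    min_eq_right hir]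

lemma weylAct_padZero_mem {r i : ℕ} {ξ : Fin i → ℝ} {S : Set ℝ} (hS : ∀ k, ξ k ∈ S)
    (ε : Fin r → ℤˣ) (σ : Equiv.Perm (Fin r)) {j : Fin r}
    (hj : weylAct ε σ (padZero r ξ) j ≠ 0) : weylAct ε σ (padZero r ξ) j ∈ S ∪ -S := by
  simp only [weylAct, padZero] at hj ⊢
  split_ifs at hj ⊢
  · rcases Int.units_eq_one_or (ε j) with he | he <;> simp [he, hS]
  · simp at hj

lemma exists_ne_zero_ne_of_ncard_support_le {ι M : Type*} [Finite ι] [Zero M] {c c' : ι → M}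
    (hne : c' ≠ c) (hcard : (Function.support c).ncard ≤ (Function.support c').ncard) :
    ∃ j, c' j ≠ 0 ∧ c' j ≠ c j := by
  by_contra! h
  have hsub : Function.support c' ⊆ Function.support c := fun j hj => by
    rwa [Function.mem_support, ← h j hj]
  have hsupp := Set.eq_of_subset_of_ncard_le hsub hcard
  refine hne (funext fun j => ?_)
  by_cases hj : c' j = 0
  · rw [hj, eq_comm, ← Function.notMem_support, ← hsupp, Function.notMem_support, hj]
  · exact h j hj

open MvPolynomial in
def separatingPoly {ι : Type*} [Fintype ι] (B : Finset ℝ) (c : ι → ℝ) : MvPolynomial ι ℂ :=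
  ∏ j, ∏ a ∈ B.erase (c j), (X j - C (a : ℂ))

section separatingPoly

variable {ι : Type*} [Fintype ι] {B : Finset ℝ} {c : ι → ℝ} {z : ι → ℂ}

lemma eval_separatingPoly :
    MvPolynomial.eval z (separatingPoly B c) = ∏ j, ∏ a ∈ B.erase (c j), (z j - a) := by
  simp [separatingPoly]

lemma eval_separatingPoly_ne_zero (hz : z ∈ centerSet c) : MvPolynomial.eval z (separatingPoly B c) ≠ 0 := by
  rw [eval_separatingPoly]
  refine Finset.prod_ne_zero_iff.2 fun j _ => Finset.prod_ne_zero_iff.2 fun a ha => ?_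
  rw [sub_ne_zero]
  intro hza
  have hzj := hz j (Set.mem_univ j)
  rw [hza, ofReal_mem_coordSet_iff] at hzj
  exact (Finset.mem_erase.1 ha).1 hzj

lemma eval_separatingPoly_eq_zero {c' : ι → ℝ} {j : ι} (hz : z ∈ centerSet c') (hj : c' j ≠ 0)
    (hjc : c' j ≠ c j) (hB : c' j ∈ B) : MvPolynomial.eval z (separatingPoly B c) = 0 := by
  rw [eval_separatingPoly]
  refine Finset.prod_eq_zero (Finset.mem_univ j)
    (Finset.prod_eq_zero (Finset.mem_erase.2 ⟨hjc, hB⟩) ?_)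
  rw [(mem_coordSet_of_ne_zero hj).1 (hz j (Set.mem_univ j)), sub_self]

end separatingPoly

theorem stmt11_general (km α β : ℝ)
    (hkm : 0 ≤ km) (r : ℕ)
    (i : ℕ) (hir : i ≤ r) (ξ : Fin i → ℝ) (hξ : ξ ∈ DkSet α β km i)
    (ε : Fin r → ℤˣ) (σ : Equiv.Perm (Fin r)) :
    ∃ p : MvPolynomial (Fin r) ℂ,
      (∀ z ∈ wActC r ε σ '' baseSet r i ξ, MvPolynomial.eval z p ≠ 0) ∧
      (∀ i' : ℕ, i ≤ i' → i' ≤ r → ∀ ξ' : Fin i' → ℝ, ξ' ∈ DkSet α β km i' →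
        ∀ (ε' : Fin r → ℤˣ) (σ' : Equiv.Perm (Fin r)),
          wActC r ε' σ' '' baseSet r i' ξ' ≠ wActC r ε σ '' baseSet r i ξ →
          ∀ z ∈ wActC r ε' σ' '' baseSet r i' ξ', MvPolynomial.eval z p = 0) := by
  have hS := dkValues_finite hkm α β r
  rw [baseSet_eq_centerSet (DkSet.apply_ne_zero hkm hξ), image_wActC_centerSet]
  refine ⟨separatingPoly (hS.union hS.neg).toFinset (weylAct ε σ (padZero r ξ)),
    fun z hz => eval_separatingPoly_ne_zero hz, ?_⟩
  intro i' hii' hi'r ξ' hξ' ε' σ' hL z hz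
  rw [baseSet_eq_centerSet (DkSet.apply_ne_zero hkm hξ'), image_wActC_centerSet] at hL hz
  have hcard : (Function.support (weylAct ε σ (padZero r ξ))).ncard ≤
      (Function.support (weylAct ε' σ' (padZero r ξ'))).ncard := by
    rwa [support_weylAct, support_weylAct, Set.ncard_image_of_injective _ σ.injective,
      Set.ncard_image_of_injective _ σ'.injective,
      ncard_support_padZero hir (DkSet.apply_ne_zero hkm hξ),
      ncard_support_padZero hi'r (DkSet.apply_ne_zero hkm hξ')]
  obtain ⟨j, hj, hjc⟩ :=
    exists_ne_zero_ne_of_ncard_support_le (fun h => hL (congrArg centerSet h)) hcard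
  refine eval_separatingPoly_eq_zero hz hj hjc ?_
  rw [Set.Finite.mem_toFinset]
  exact weylAct_padZero_mem (DkSet.apply_mem_dkValues hkm hi'r hξ') ε' σ' hj

theorem stmt11 (ks km kl α β : ℝ) (hα : α = ks + kl - 1 / 2) (hβ : β = kl - 1 / 2)
    (hkm : 0 ≤ km) (r : ℕ)
    (i : ℕ) (hir : i ≤ r) (ξ : Fin i → ℝ) (hξ : ξ ∈ DkSet α β km i)
    (ε : Fin r → ℤˣ) (σ : Equiv.Perm (Fin r)) :
    ∃ p : MvPolynomial (Fin r) ℂ,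
      (∀ z ∈ wActC r ε σ '' baseSet r i ξ, MvPolynomial.eval z p ≠ 0) ∧
      (∀ i' : ℕ, i ≤ i' → i' ≤ r → ∀ ξ' : Fin i' → ℝ, ξ' ∈ DkSet α β km i' →
        ∀ (ε' : Fin r → ℤˣ) (σ' : Equiv.Perm (Fin r)),
          wActC r ε' σ' '' baseSet r i' ξ' ≠ wActC r ε σ '' baseSet r i ξ →
          ∀ z ∈ wActC r ε' σ' '' baseSet r i' ξ', MvPolynomial.eval z p = 0) :=
  stmt11_general km α β hkm r i hir ξ hξ ε σ
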